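/- Block sum of matrices over a strict bimonoidal category R is strictly associative, (U ⊞ V) ⊞ W = U ⊞ (V ⊞ W), and the empty (0×0) matrix is a strict two-sided unit: I_0 ⊞ U = U = U ⊞ I_0. Consequently, block sum makes the bicategory Mod_R (with objects the natural numbers, and with Mod_R(n,n) = GL_n(R) and Mod_R(n,m) empty for n ≠ m) into a strict symmetric monoidal bicategory with braiding given by β_{n,m}. -/
import Mathlib


/-!
STATEMENT 5: Block sum of matrices over a strict bimonoidal category `R` is
strictly associative, with the empty `0×0` matrix as strict two-sided unit;
consequently block sum makes the bicategory `Mod_R` (objects `ℕ`, endomorphism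
category of `n` the weakly invertible `n×n` matrices `GL_n(R)`, no other
`1`-morphisms) into a strict symmetric monoidal bicategory with braiding the
matrices `β_{n,m}`.

We model `n×n` matrices over the objects of `R` uniformly as functions
`ℕ → ℕ → R` (entries outside the `n×n` range being irrelevant; `MatEq n`
is equality as `n×n` matrices), so that block sum is literally strictly
associative and unital.  The "consequently" clause is rendered by the
structure `ModRStrictSymmetricMonoidal`, which bundles precisely the
verifications of the paper's theorem: block sum is a strict pseudofunctor
(strictly preserving horizontal composition, identities and weak
invertibility), `β` is a strict transformation (`β ∘ (U ⊞ V) = (V ⊞ U) ∘ β`),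
`β` is self-inverse, and the two hexagon axioms hold strictly.
-/

universe u

/-- The object-level data of a strict bimonoidal category. -/
structure ObjRig (α : Type u) where
  add : α → α → α
  zero : α
  mul : α → α → α
  one : α
  add_assoc : ∀ a b c, add (add a b) c = add a (add b c)
  zero_add : ∀ a, add zero a = a
  add_zero : ∀ a, add a zero = a
  mul_assoc : ∀ a b c, mul (mul a b) c = mul a (mul b c)
  one_mul : ∀ a, mul one a = a
  mul_one : ∀ a, mul a one = a
  right_distrib : ∀ a b c, mul (add a b) c = add (mul a c) (mul b c)
  zero_mul : ∀ a, mul zero a = zero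
  mul_zero : ∀ a, mul a zero = zero


namespace ObjRig

variable {α : Type u} (B : ObjRig α)

/-- Matrices over `R` of unspecified size: entries indexed by `ℕ × ℕ`. -/
def Mat (α : Type u) := ℕ → ℕ → α

/-- Equality as `n × n` matrices. -/
def MatEq (n : ℕ) (A C : Mat α) : Prop :=
  ∀ i j, i < n → j < n → A i j = C i j

/-- Matrix multiplication of `n × n` matrices:
`(U·V) i k = ⊕_{j<n} U i j ⊗ V j k`. -/
def matMulN (n : ℕ) (U V : Mat α) : Mat α :=
  fun i k => ((List.range n).map fun j => B.mul (U i j) (V j k)).foldr B.add B.zero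

/-- The identity `n × n` matrix (zero outside the `n × n` range). -/
def idN (n : ℕ) : Mat α :=
  fun i j => if i = j ∧ i < n then B.one else B.zero

/-- Block sum `U ⊞ V` of an `n × n` matrix `U` with another matrix `V`. -/
def bsum (n : ℕ) (U V : Mat α) : Mat α :=
  fun i j =>
    if i < n then (if j < n then U i j else B.zero)
    else (if j < n then B.zero else V (i - n) (j - n))

/-- The braiding matrix `β_{n,m} : n ⊞ m ⟶ m ⊞ n`, with `I_m` in the
upper-right block and `I_n` in the lower-left block. -/
def betaN (n m : ℕ) : Mat α :=
  fun i j =>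
    if i < m ∧ j = n + i then B.one
    else if m ≤ i ∧ i < m + n ∧ j + m = i then B.one
    else B.zero

end ObjRig

universe v

/-- π₀-data and ring-completion data, used to express weak invertibility. -/
structure PiZeroData {α : Type u} (B : ObjRig α) (S : Type v) [CommSemiring S] where
  q : α → S
  q_add : ∀ a b, q (B.add a b) = q a + q b
  q_mul : ∀ a b, q (B.mul a b) = q a * q b
  q_zero : q B.zero = 0
  q_one : q B.one = 1
  surj : Function.Surjective q

/-- Weak invertibility of an `n × n` matrix over `R`: the matrix of path
components has determinant a unit in the ring completion. -/
def WeaklyInvertibleN {α : Type u} {B : ObjRig α} {S K : Type v} [CommSemiring S]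
    [CommRing K] (P : PiZeroData B S) (φ : S →+* K) (n : ℕ) (U : ObjRig.Mat α) : Prop :=
  IsUnit ((Matrix.of fun i j : Fin n => φ (P.q (U i j))).det)

open ObjRig

/-- The verifications making `(Mod_R, ⊞, 0, β)` a strict symmetric monoidal
bicategory: `⊞` is a strict pseudofunctor `Mod_R × Mod_R → Mod_R` (it strictly
preserves `1`-morphisms, i.e. weakly invertible matrices, their horizontal
composition and the identities), it is strictly associative and unital on
objects and `1`-morphisms, and `β` is a strict self-inverse transformation
`⊞ ⟶ ⊞ ∘ τ` satisfying both hexagons strictly. -/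
structure ModRStrictSymmetricMonoidal {α : Type u} (B : ObjRig α) {S K : Type v}
    [CommSemiring S] [CommRing K] (P : PiZeroData B S) (φ : S →+* K) : Prop where
  /-- `⊞` preserves weak invertibility, so is defined on the `1`-morphisms of `Mod_R`. -/
  gl_pres : ∀ n m U V, WeaklyInvertibleN P φ n U → WeaklyInvertibleN P φ m V →
      WeaklyInvertibleN P φ (n + m) (B.bsum n U V)
  /-- `⊞` strictly preserves horizontal composition (matrix multiplication). -/
  comp_pres : ∀ n m U U' V V', MatEq (n + m)
      (B.matMulN (n + m) (B.bsum n U' V') (B.bsum n U V))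
      (B.bsum n (B.matMulN n U' U) (B.matMulN m V' V))
  /-- `⊞` strictly preserves identity `1`-morphisms. -/
  id_pres : ∀ n m, MatEq (n + m) (B.bsum n (B.idN n) (B.idN m)) (B.idN (n + m))
  /-- `⊞` is strictly associative on `1`-morphisms. -/
  assoc1 : ∀ n m p U V W, MatEq (n + m + p)
      (B.bsum (n + m) (B.bsum n U V) W) (B.bsum n U (B.bsum m V W))
  /-- `I_0` is a strict unit on `1`-morphisms. -/
  unit1 : ∀ n U, MatEq n (B.bsum 0 (B.idN 0) U) U ∧ MatEq n (B.bsum n U (B.idN 0)) U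
  /-- `β` is a `1`-equivalence: it is its own inverse. -/
  beta_inv : ∀ n m, MatEq (n + m) (B.matMulN (n + m) (B.betaN m n) (B.betaN n m))
      (B.idN (n + m))
  /-- `β` is a strict transformation: `β ∘ (U ⊞ V) = (V ⊞ U) ∘ β`. -/
  beta_natural : ∀ n m U V, MatEq (n + m)
      (B.matMulN (n + m) (B.betaN n m) (B.bsum n U V))
      (B.matMulN (n + m) (B.bsum m V U) (B.betaN n m))
  /-- First hexagon: `β_{n,m+p} = (I_m ⊞ β_{n,p}) ∘ (β_{n,m} ⊞ I_p)`. -/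
  hexagon1 : ∀ n m p, MatEq (n + m + p) (B.betaN n (m + p))
      (B.matMulN (n + m + p) (B.bsum m (B.idN m) (B.betaN n p))
        (B.bsum (n + m) (B.betaN n m) (B.idN p)))
  /-- Second hexagon: `β_{n+m,p} = (β_{n,p} ⊞ I_m) ∘ (I_n ⊞ β_{m,p})`. -/
  hexagon2 : ∀ n m p, MatEq (n + m + p) (B.betaN (n + m) p)
      (B.matMulN (n + m + p) (B.bsum (n + p) (B.betaN n p) (B.idN m))
        (B.bsum n (B.idN n) (B.betaN m p)))

namespace ObjRig

variable {α : Type u} (B : ObjRig α)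

/-- Fold of `B.add` over the values `f 0, …, f (n-1)` with base `b`. -/
def foldB (b : α) (n : ℕ) (f : ℕ → α) : α := ((List.range n).map f).foldr B.add b

lemma foldB_succ (b : α) (n : ℕ) (f : ℕ → α) :
    B.foldB b (n + 1) f = B.foldB (B.add (f n) b) n f := by
  simp [foldB, List.range_succ, List.foldr_append]

lemma matMulN_def (n : ℕ) (U V : Mat α) (i k : ℕ) :
    B.matMulN n U V i k = B.foldB B.zero n (fun j => B.mul (U i j) (V j k)) := rfl

lemma foldB_congr (b : α) (n : ℕ) (f g : ℕ → α) (h : ∀ j < n, f j = g j) :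
    B.foldB b n f = B.foldB b n g := by
  induction n generalizing b with
  | zero => rfl
  | succ n ih =>
    rw [foldB_succ, foldB_succ, h n (Nat.lt_succ_self n)]
    exact ih _ fun j hj => h j (Nat.lt_succ_of_lt hj)

lemma foldB_zero_of (b : α) (n : ℕ) (f : ℕ → α) (h : ∀ j < n, f j = B.zero) :
    B.foldB b n f = b := by
  induction n generalizing b with
  | zero => rfl
  | succ n ih =>
    rw [foldB_succ, h n (Nat.lt_succ_self n), B.zero_add]
    exact ih b fun j hj => h j (Nat.lt_succ_of_lt hj)

lemma foldB_delta (b : α) (n : ℕ) (f : ℕ → α) (j0 : ℕ) (hj0 : j0 < n)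
    (hz : ∀ j < n, j ≠ j0 → f j = B.zero) :
    B.foldB b n f = B.add (f j0) b := by
  induction n generalizing b with
  | zero => omega
  | succ n ih =>
    rw [foldB_succ]
    rcases Nat.lt_or_ge j0 n with h | h
    · rw [hz n (Nat.lt_succ_self n) (by omega), B.zero_add]
      exact ih b h fun j hj hne => hz j (Nat.lt_succ_of_lt hj) hne
    · have hj : j0 = n := by omega
      rw [hj]
      exact B.foldB_zero_of _ n f fun j hjn => hz j (Nat.lt_succ_of_lt hjn) (by omega)

lemma foldB_tail (b : α) (n m : ℕ) (f : ℕ → α)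
    (h : ∀ j, n ≤ j → j < n + m → f j = B.zero) :
    B.foldB b (n + m) f = B.foldB b n f := by
  induction m with
  | zero => rfl
  | succ m ih =>
    rw [show n + (m + 1) = (n + m) + 1 by omega, foldB_succ,
      h (n + m) (by omega) (by omega), B.zero_add]
    exact ih fun j h1 h2 => h j h1 (by omega)

lemma foldB_shift (b : α) (n m : ℕ) (f : ℕ → α) (h : ∀ j < n, f j = B.zero) :
    B.foldB b (n + m) f = B.foldB b m (fun j => f (n + j)) := by
  induction m generalizing b with
  | zero => exact B.foldB_zero_of b n f h
  | succ m ih =>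
    rw [show n + (m + 1) = (n + m) + 1 by omega, foldB_succ, foldB_succ, ih]

/-- Multiplication on the left by a matrix whose `i`-th row is a delta row. -/
lemma matMul_rowDelta (n : ℕ) (U V : Mat α) (i k σi : ℕ) (hσ : σi < n)
    (hrow : ∀ j < n, U i j = if j = σi then B.one else B.zero) :
    B.matMulN n U V i k = V σi k := by
  rw [matMulN_def, B.foldB_delta B.zero n _ σi hσ
    (fun j hj hne => by rw [hrow j hj, if_neg hne, B.zero_mul]),
    hrow σi hσ, if_pos rfl, B.one_mul, B.add_zero]

/-- Multiplication on the right by a matrix whose `k`-th column is a delta column. -/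
lemma matMul_colDelta (n : ℕ) (U V : Mat α) (i k τ : ℕ) (hτ : τ < n)
    (hcol : ∀ j < n, V j k = if j = τ then B.one else B.zero) :
    B.matMulN n U V i k = U i τ := by
  rw [matMulN_def, B.foldB_delta B.zero n _ τ hτ
    (fun j hj hne => by rw [hcol j hj, if_neg hne, B.mul_zero]),
    hcol τ hτ, if_pos rfl, B.mul_one, B.add_zero]

/-- The permutation underlying `β_{n,m}`. -/
def sig (n m i : ℕ) : ℕ := if i < m then n + i else i - m

lemma sig_lt {n m i : ℕ} (hi : i < n + m) : sig n m i < n + m := by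
  unfold sig; split_ifs <;> omega

lemma betaN_row (n m i : ℕ) (hi : i < n + m) (j : ℕ) :
    B.betaN n m i j = if j = sig n m i then B.one else B.zero := by
  simp only [ObjRig.betaN, sig]
  split_ifs <;> first | rfl | omega

lemma betaN_col (n m k : ℕ) (hk : k < n + m) (j : ℕ) :
    B.betaN n m j k = if j = (if k < n then k + m else k - n) then B.one else B.zero := by
  simp only [ObjRig.betaN]
  split_ifs <;> first | rfl | omega

lemma idN_row (n i : ℕ) (hi : i < n) (j : ℕ) :
    B.idN n i j = if j = i then B.one else B.zero := by
  simp only [ObjRig.idN]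
  split_ifs <;> first | rfl | omega

/-- Block sum of two delta-row matrices is a delta-row matrix. -/
lemma bsum_rowDelta (n m : ℕ) (U V : Mat α) (σU σV : ℕ → ℕ)
    (hU : ∀ i < n, ∀ j, U i j = if j = σU i then B.one else B.zero)
    (hV : ∀ i < m, ∀ j, V i j = if j = σV i then B.one else B.zero)
    (hσU : ∀ i < n, σU i < n) :
    ∀ i < n + m, ∀ j, B.bsum n U V i j
      = if j = (if i < n then σU i else n + σV (i - n)) then B.one else B.zero := by
  intro i hi j
  simp only [ObjRig.bsum]
  rcases Nat.lt_or_ge i n with h | h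
  · rw [if_pos h, if_pos h]
    rcases Nat.lt_or_ge j n with hj | hj
    · rw [if_pos hj, hU i h j]
    · rw [if_neg (show ¬ j < n by omega),
        if_neg (show ¬ j = σU i by have := hσU i h; omega)]
  · rw [if_neg (show ¬ i < n by omega), if_neg (show ¬ i < n by omega),
      hV (i - n) (by omega) (j - n)]
    split_ifs <;> first | rfl | omega

end ObjRig

open ObjRig

section Proofs

variable {α : Type u} (B : ObjRig α)

lemma modR_assoc1 : ∀ n m p (U V W : Mat α), MatEq (n + m + p)
    (B.bsum (n + m) (B.bsum n U V) W) (B.bsum n U (B.bsum m V W)) := by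
  intro n m p U V W i j _ _
  simp only [ObjRig.bsum]
  split_ifs <;> first | rfl | omega | (congr 1 <;> omega)

lemma modR_unit1 : ∀ n (U : Mat α), MatEq n (B.bsum 0 (B.idN 0) U) U
    ∧ MatEq n (B.bsum n U (B.idN 0)) U := by
  intro n U
  constructor
  · intro i j _ _; simp [ObjRig.bsum]
  · intro i j hi hj; simp [ObjRig.bsum, hi, hj]

lemma modR_comp_pres : ∀ n m (U U' V V' : Mat α), MatEq (n + m)
    (B.matMulN (n + m) (B.bsum n U' V') (B.bsum n U V))
    (B.bsum n (B.matMulN n U' U) (B.matMulN m V' V)) := by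
  intro n m U U' V V' i k hi hk
  rw [matMulN_def]
  rcases Nat.lt_or_ge i n with h | h
  · rw [B.foldB_tail _ n m _ (fun j h1 h2 => by
      simp only [ObjRig.bsum, if_pos h, if_neg (by omega : ¬ j < n)]
      exact B.zero_mul _)]
    rcases Nat.lt_or_ge k n with hk' | hk'
    · rw [B.foldB_congr _ n _ (fun j => B.mul (U' i j) (U j k)) (fun j hj => by
        simp only [ObjRig.bsum, if_pos h, if_pos hj, if_pos hk'])]
      simp only [ObjRig.bsum, if_pos h, if_pos hk']
      rfl
    · rw [B.foldB_zero_of _ n _ (fun j hj => by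
        simp only [ObjRig.bsum, if_pos hj, if_neg (by omega : ¬ k < n)]
        exact B.mul_zero _)]
      simp only [ObjRig.bsum, if_pos h, if_neg (by omega : ¬ k < n)]
  · rw [B.foldB_shift _ n m _ (fun j hj => by
      simp only [ObjRig.bsum, if_neg (by omega : ¬ i < n), if_pos hj]
      exact B.zero_mul _)]
    rcases Nat.lt_or_ge k n with hk' | hk'
    · rw [B.foldB_zero_of _ m _ (fun j hj => by
        simp only [ObjRig.bsum, if_neg (by omega : ¬ n + j < n), if_pos hk']
        exact B.mul_zero _)]
      simp only [ObjRig.bsum, if_neg (by omega : ¬ i < n), if_pos hk']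
    · rw [B.foldB_congr _ m _
        (fun j => B.mul (V' (i - n) j) (V j (k - n))) (fun j hj => by
        simp only [ObjRig.bsum, if_neg (by omega : ¬ i < n),
          if_neg (by omega : ¬ n + j < n), if_neg (by omega : ¬ k < n),
          Nat.add_sub_cancel_left])]
      simp only [ObjRig.bsum, if_neg (by omega : ¬ i < n), if_neg (by omega : ¬ k < n)]
      rfl

lemma modR_id_pres : ∀ n m, MatEq (n + m) (B.bsum n (B.idN n) (B.idN m))
    (B.idN (n + m)) := by
  intro n m i j hi hj
  simp only [ObjRig.bsum, ObjRig.idN]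
  split_ifs <;> first | rfl | omega

lemma modR_beta_inv : ∀ n m, MatEq (n + m)
    (B.matMulN (n + m) (B.betaN m n) (B.betaN n m)) (B.idN (n + m)) := by
  intro n m i j hi hj
  rw [B.matMul_rowDelta (n + m) _ _ i j (sig m n i)
      (by have := sig_lt (n := m) (m := n) (i := i) (by omega); omega)
      (fun j' _ => B.betaN_row m n i (by omega) j'),
    B.betaN_row n m (sig m n i) (by have := sig_lt (n := m) (m := n) (i := i) (by omega); omega) j,
    B.idN_row (n + m) i hi j]
  have : sig n m (sig m n i) = i := by unfold sig; split_ifs <;> omega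
  rw [this]

lemma modR_beta_natural : ∀ n m (U V : Mat α), MatEq (n + m)
    (B.matMulN (n + m) (B.betaN n m) (B.bsum n U V))
    (B.matMulN (n + m) (B.bsum m V U) (B.betaN n m)) := by
  intro n m U V i k hi hk
  rw [B.matMul_rowDelta (n + m) _ _ i k (sig n m i) (sig_lt hi)
      (fun j' _ => B.betaN_row n m i hi j'),
    B.matMul_colDelta (n + m) _ _ i k (if k < n then k + m else k - n)
      (by split_ifs <;> omega)
      (fun j' _ => B.betaN_col n m k hk j')]
  simp only [ObjRig.bsum, sig]
  split_ifs <;> first | rfl | omega | (congr 1 <;> omega)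

lemma modR_hexagon1 : ∀ n m p, MatEq (n + m + p) (B.betaN n (m + p))
    (B.matMulN (n + m + p) (B.bsum m (B.idN m) (B.betaN n p))
      (B.bsum (n + m) (B.betaN n m) (B.idN p))) := by
  intro n m p i k hi hk
  have hA := B.bsum_rowDelta m (n + p) (B.idN m) (B.betaN n p)
    (fun i => i) (sig n p)
    (fun i hi j => B.idN_row m i hi j)
    (fun i hi j => B.betaN_row n p i hi j)
    (fun i hi => hi)
  have hA1 := B.bsum_rowDelta (n + m) p (B.betaN n m) (B.idN p)
    (sig n m) (fun i => i)
    (fun i hi j => B.betaN_row n m i hi j)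
    (fun i hi j => B.idN_row p i hi j)
    (fun i hi => sig_lt hi)
  set σ1 : ℕ → ℕ := fun i => if i < m then i else m + sig n p (i - m) with hσ1
  have hσ1lt : σ1 i < n + m + p := by
    have := sig_lt (n := n) (m := p) (i := i - m)
    simp only [hσ1, sig] at *
    split_ifs <;> omega
  rw [B.matMul_rowDelta (n + m + p) _ _ i k (σ1 i) hσ1lt
      (fun j' _ => by have := hA i (by omega) j'; simpa using this),
    hA1 (σ1 i) (by omega) k,
    B.betaN_row n (m + p) i (by omega) k]
  have : (if σ1 i < n + m then sig n m (σ1 i) else n + m + (σ1 i - (n + m)))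
      = sig n (m + p) i := by
    simp only [hσ1, sig]; split_ifs <;> omega
  rw [this]

lemma modR_hexagon2 : ∀ n m p, MatEq (n + m + p) (B.betaN (n + m) p)
    (B.matMulN (n + m + p) (B.bsum (n + p) (B.betaN n p) (B.idN m))
      (B.bsum n (B.idN n) (B.betaN m p))) := by
  intro n m p i k hi hk
  have hA := B.bsum_rowDelta (n + p) m (B.betaN n p) (B.idN m)
    (sig n p) (fun i => i)
    (fun i hi j => B.betaN_row n p i hi j)
    (fun i hi j => B.idN_row m i hi j)
    (fun i hi => sig_lt hi)
  have hA1 := B.bsum_rowDelta n (m + p) (B.idN n) (B.betaN m p)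
    (fun i => i) (sig m p)
    (fun i hi j => B.idN_row n i hi j)
    (fun i hi j => B.betaN_row m p i hi j)
    (fun i hi => hi)
  set σ1 : ℕ → ℕ := fun i => if i < n + p then sig n p i else (n + p) + (i - (n + p)) with hσ1
  have hσ1lt : σ1 i < n + m + p := by
    simp only [hσ1, sig]
    split_ifs <;> omega
  rw [B.matMul_rowDelta (n + m + p) _ _ i k (σ1 i) hσ1lt
      (fun j' _ => by have := hA i (by omega) j'; simpa using this),
    hA1 (σ1 i) (by omega) k,
    B.betaN_row (n + m) p i (by omega) k]
  have : (if σ1 i < n then σ1 i else n + sig m p (σ1 i - n)) = sig (n + m) p i := by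
    simp only [hσ1, sig]; split_ifs <;> omega
  rw [this]

lemma modR_gl_pres {S K : Type v} [CommSemiring S] [CommRing K]
    (P : PiZeroData B S) (φ : S →+* K) :
    ∀ n m (U V : Mat α), WeaklyInvertibleN P φ n U → WeaklyInvertibleN P φ m V →
      WeaklyInvertibleN P φ (n + m) (B.bsum n U V) := by
  intro n m U V hU hV
  unfold WeaklyInvertibleN at *
  set A : Matrix (Fin n) (Fin n) K := Matrix.of fun i j => φ (P.q (U i j)) with hA
  set D : Matrix (Fin m) (Fin m) K := Matrix.of fun i j => φ (P.q (V i j)) with hD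
  have hq0 : φ (P.q B.zero) = 0 := by rw [P.q_zero, map_zero]
  have key : ((Matrix.of fun i j : Fin (n + m) => φ (P.q (B.bsum n U V i j))).submatrix
      finSumFinEquiv finSumFinEquiv) = Matrix.fromBlocks A 0 0 D := by
    ext i j
    rcases i with i | i <;> rcases j with j | j <;>
      simp [ObjRig.bsum, Matrix.submatrix, hA, hD, finSumFinEquiv,
        Fin.castAdd, Fin.natAdd, i.isLt, j.isLt, hq0, Fin.castLE]
  have hdet := Matrix.det_submatrix_equiv_self finSumFinEquiv
    (Matrix.of fun i j : Fin (n + m) => φ (P.q (B.bsum n U V i j)))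
  rw [key, Matrix.det_fromBlocks_zero₁₂] at hdet
  rw [← hdet]
  exact hU.mul hV

end Proofs

/-- block sum is strictly associative with the empty matrix as
strict two-sided unit, and consequently `Mod_R` is a strict symmetric monoidal
bicategory under block sum, with braiding `β`. -/
theorem modR_strict_symmetric_monoidal
    {α : Type u} (B : ObjRig α) {S K : Type v} [CommSemiring S] [CommRing K]
    (P : PiZeroData B S) (φ : S →+* K) :
    (∀ n m p (U V W : Mat α), MatEq (n + m + p)
        (B.bsum (n + m) (B.bsum n U V) W) (B.bsum n U (B.bsum m V W)))
      ∧ (∀ n (U : Mat α), MatEq n (B.bsum 0 (B.idN 0) U) U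
          ∧ MatEq n (B.bsum n U (B.idN 0)) U)
      ∧ ModRStrictSymmetricMonoidal B P φ := by
  refine ⟨modR_assoc1 B, modR_unit1 B, ?_⟩
  exact
    { gl_pres := modR_gl_pres B P φ
      comp_pres := fun n m U U' V V' => modR_comp_pres B n m U U' V V'
      id_pres := modR_id_pres B
      assoc1 := modR_assoc1 B
      unit1 := modR_unit1 B
      beta_inv := modR_beta_inv B
      beta_natural := modR_beta_natural B
      hexagon1 := modR_hexagon1 B
      hexagon2 := modR_hexagon2 B }
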